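/- arXiv:0808.2037 — 7 statements merged into one kernel-verified Lean document; each statement's English description precedes it below -/
import Mathlib

section
/- Let A be a unital complex Banach algebra with ‖1‖ = 1 and let a ∈ A be dissipative, i.e., Re ρ(a) ≤ 0 for all states ρ. Then ‖1 + t·a‖ ≤ 1 + t²‖a‖² for all t ≥ 0. -/
/-- A state on a unital Banach algebra: a continuous linear functional `ρ`
with `‖ρ‖ = 1` and `ρ 1 = 1`. -/
def IsState {A : Type*} [NormedRing A] [NormedAlgebra ℂ A] (ρ : A →L[ℂ] ℂ) : Prop :=
  ‖ρ‖ = 1 ∧ ρ 1 = 1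

/-- An element is dissipative if `Re ρ(a) ≤ 0` for all states `ρ`. -/
def IsDissipative {A : Type*} [NormedRing A] [NormedAlgebra ℂ A] (a : A) : Prop :=
  ∀ ρ : A →L[ℂ] ℂ, IsState ρ → (ρ a).re ≤ 0

/-!
Testing dissipativity of `a` against the states `b ↦ f (b * x) / ‖x‖`, where `f` is a norming
functional of `x`, gives `‖x‖ ≤ ‖(1 - a) * x‖`, so `‖(1 - s • a)⁻¹‖ ≤ 1` whenever the inverse
exists. Because this bound is uniform in `s ≥ 0`, invertibility of `1 - s • a` propagates from
`s = 0` to every `s ≥ 0` in steps shorter than `‖a‖⁻¹`. Finally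
`1 + t • a = (1 - t • a)⁻¹ * (1 - (t • a) ^ 2)`, and the bound follows.
-/

theorem Units.isUnit_of_norm_sub_lt_one {R : Type*} [NormedRing R] [HasSummableGeomSeries R]
    (u : Rˣ) (hu : ‖(↑u⁻¹ : R)‖ ≤ 1) {y : R} (hy : ‖y - u‖ < 1) : IsUnit y := by
  have hsmall : ‖(↑u⁻¹ : R) * (u - y)‖ < 1 :=
    calc ‖(↑u⁻¹ : R) * (u - y)‖ ≤ ‖(↑u⁻¹ : R)‖ * ‖(u : R) - y‖ := norm_mul_le _ _
      _ ≤ 1 * ‖y - u‖ := by rw [norm_sub_rev]; gcongr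
      _ < 1 := by rwa [one_mul]
  have hy_eq : y = u * (1 - (↑u⁻¹ : R) * (u - y)) := by
    rw [mul_sub, mul_one, ← mul_assoc, Units.mul_inv, one_mul, sub_sub_cancel]
  rw [hy_eq]
  exact u.isUnit.mul (isUnit_one_sub_of_norm_lt_one hsmall)

theorem isState_inv_norm_smul_comp_mul_right {A : Type*} [NormedRing A] [NormedAlgebra ℂ A]
    [NormOneClass A] {x : A} (hx : x ≠ 0)
    {f : A →L[ℂ] ℂ} (hf : ‖f‖ = 1) (hfx : f x = ‖x‖) :
    IsState ((‖x‖ : ℂ)⁻¹ • f.comp ((ContinuousLinearMap.mul ℂ A).flip x)) := by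
  set ρ := (‖x‖ : ℂ)⁻¹ • f.comp ((ContinuousLinearMap.mul ℂ A).flip x)
  have hx0 : 0 < ‖x‖ := norm_pos_iff.mpr hx
  have hρ : ∀ b, ρ b = (‖x‖ : ℂ)⁻¹ * f (b * x) := fun _ => rfl
  have hρ1 : ρ 1 = 1 := by
    rw [hρ, one_mul, hfx, inv_mul_cancel₀ (by exact_mod_cast hx0.ne')]
  have hρ_le : ‖ρ‖ ≤ 1 := by
    refine ContinuousLinearMap.opNorm_le_bound _ zero_le_one fun b => ?_
    rw [hρ, norm_mul, norm_inv, Complex.norm_real, Real.norm_of_nonneg hx0.le, one_mul,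
      inv_mul_le_iff₀ hx0]
    calc ‖f (b * x)‖ ≤ ‖f‖ * ‖b * x‖ := f.le_opNorm _
      _ ≤ ‖b‖ * ‖x‖ := by rw [hf, one_mul]; exact norm_mul_le _ _
      _ = ‖x‖ * ‖b‖ := mul_comm _ _
  have hρ_ge : 1 ≤ ‖ρ‖ := by simpa [hρ1] using ρ.le_opNorm 1
  exact ⟨le_antisymm hρ_le hρ_ge, hρ1⟩

namespace IsDissipative

variable {A : Type*} [NormedRing A] [NormedAlgebra ℂ A]

theorem smul_of_nonneg {a : A} (ha : IsDissipative a) {s : ℝ} (hs : 0 ≤ s) :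
    IsDissipative ((s : ℂ) • a) := fun ρ hρ => by
  rw [map_smul, smul_eq_mul, Complex.re_ofReal_mul]
  exact mul_nonpos_of_nonneg_of_nonpos hs (ha ρ hρ)

variable [NormOneClass A]

theorem norm_le_norm_sub_mul {a : A} (ha : IsDissipative a) (x : A) :
    ‖x‖ ≤ ‖x - a * x‖ := by
  rcases eq_or_ne x 0 with rfl | hx
  · simp
  obtain ⟨f, hf, hfx⟩ := exists_dual_vector ℂ x (norm_ne_zero_iff.mpr hx)
  have hx0 : 0 < ‖x‖ := norm_pos_iff.mpr hx
  have hfa : (f (a * x)).re ≤ 0 := by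
    have h := ha _ (isState_inv_norm_smul_comp_mul_right hx hf hfx)
    change ((‖x‖ : ℂ)⁻¹ * f (a * x)).re ≤ 0 at h
    rw [← Complex.ofReal_inv, Complex.re_ofReal_mul] at h
    exact le_of_mul_le_mul_left (by rwa [mul_zero]) (inv_pos.mpr hx0)
  calc ‖x‖ ≤ (f (x - a * x)).re := by simp [map_sub, hfx, hfa]
    _ ≤ ‖f (x - a * x)‖ := Complex.re_le_norm _
    _ ≤ ‖f‖ * ‖x - a * x‖ := f.le_opNorm _
    _ = ‖x - a * x‖ := by rw [hf, one_mul]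

theorem norm_le_one_of_one_sub_mul_eq_one {a v : A} (ha : IsDissipative a)
    (hv : (1 - a) * v = 1) : ‖v‖ ≤ 1 := by
  calc ‖v‖ ≤ ‖v - a * v‖ := ha.norm_le_norm_sub_mul v
    _ = ‖(1 - a) * v‖ := by rw [sub_mul, one_mul]
    _ = 1 := by rw [hv, norm_one]

variable [CompleteSpace A]

theorem isUnit_one_sub_smul_of_isUnit {a : A} (ha : IsDissipative a) {s₀ s : ℝ} (hs₀ : 0 ≤ s₀)
    (hunit : IsUnit (1 - (s₀ : ℂ) • a)) (hclose : |s - s₀| * ‖a‖ < 1) :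
    IsUnit (1 - (s : ℂ) • a) := by
  obtain ⟨u, hu⟩ := hunit
  have hinv : ‖(↑u⁻¹ : A)‖ ≤ 1 :=
    (ha.smul_of_nonneg hs₀).norm_le_one_of_one_sub_mul_eq_one (by rw [← hu, u.mul_inv])
  refine u.isUnit_of_norm_sub_lt_one hinv ?_
  rwa [hu, sub_sub_sub_cancel_left, ← sub_smul, ← Complex.ofReal_sub, norm_smul,
    Complex.norm_real, Real.norm_eq_abs, abs_sub_comm]

theorem isUnit_one_sub_smul {a : A} (ha : IsDissipative a) {s : ℝ} (hs : 0 ≤ s) :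
    IsUnit (1 - (s : ℂ) • a) := by
  set δ : ℝ := (‖a‖ + 1)⁻¹
  have hδ : 0 < δ := by positivity
  have hδa : δ * ‖a‖ < 1 := by
    rw [inv_mul_lt_iff₀ (by positivity), mul_one]
    exact lt_add_one _
  have hreach : ∀ n : ℕ, ∀ s : ℝ, 0 ≤ s → s ≤ n * δ → IsUnit (1 - (s : ℂ) • a) := by
    intro n
    induction n with
    | zero =>
      intro s hs hsn
      obtain rfl : s = 0 := le_antisymm (by simpa using hsn) hs
      simp
    | succ n ih =>
      intro s hs hsn
      have hs₀ : 0 ≤ max 0 (s - δ) := le_max_left _ _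
      refine ha.isUnit_one_sub_smul_of_isUnit hs₀ (ih _ hs₀ ?_) ?_
      · push_cast at hsn
        exact max_le (by positivity) (by linarith)
      · calc |s - max 0 (s - δ)| * ‖a‖ ≤ δ * ‖a‖ := by
              gcongr
              have hmax : max 0 (s - δ) ≤ s + δ := max_le (by positivity) (by linarith)
              rw [abs_le]
              constructor <;> linarith [le_max_right 0 (s - δ)]
          _ < 1 := hδa
  obtain ⟨n, hn⟩ := exists_nat_ge (s / δ)
  exact hreach n s hs (by rwa [div_le_iff₀ hδ] at hn)

theorem isUnit_one_sub {a : A} (ha : IsDissipative a) : IsUnit (1 - a) := by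
  simpa using ha.isUnit_one_sub_smul zero_le_one

end IsDissipative

theorem norm_one_add_le_of_mul_one_sub_eq_one {R : Type*} [NormedRing R] [NormOneClass R]
    {b v : R} (hv : v * (1 - b) = 1) (hv_le : ‖v‖ ≤ 1) : ‖1 + b‖ ≤ 1 + ‖b‖ ^ 2 := by
  have hfactor : 1 + b = v * (1 - b * b) :=
    calc 1 + b = v * (1 - b) * (1 + b) := by rw [hv, one_mul]
      _ = v * (1 - b * b) := by rw [mul_assoc]; noncomm_ring
  calc ‖1 + b‖ = ‖v * (1 - b * b)‖ := by rw [hfactor]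
    _ ≤ ‖v‖ * ‖1 - b * b‖ := norm_mul_le _ _
    _ ≤ 1 * (‖(1 : R)‖ + ‖b * b‖) := by gcongr; exact norm_sub_le _ _
    _ ≤ 1 + ‖b‖ ^ 2 := by rw [one_mul, norm_one, sq]; gcongr; exact norm_mul_le _ _

theorem stmt1 {A : Type*} [NormedRing A] [NormedAlgebra ℂ A] [NormOneClass A]
    [CompleteSpace A] (a : A) (ha : IsDissipative a) :
    ∀ t : ℝ, 0 ≤ t → ‖1 + (t : ℂ) • a‖ ≤ 1 + t ^ 2 * ‖a‖ ^ 2 := by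
  intro t ht
  have hb : IsDissipative ((t : ℂ) • a) := ha.smul_of_nonneg ht
  obtain ⟨u, hu⟩ := hb.isUnit_one_sub
  have hinv : ‖(↑u⁻¹ : A)‖ ≤ 1 := hb.norm_le_one_of_one_sub_mul_eq_one (by rw [← hu, u.mul_inv])
  have h := norm_one_add_le_of_mul_one_sub_eq_one (by rw [← hu, u.inv_mul]) hinv
  rwa [norm_smul, Complex.norm_real, Real.norm_of_nonneg ht, mul_pow] at h
end

section
/- Let A be a unital complex Banach algebra with ‖1‖ = 1 and let a ∈ A be dissipative. Then the numerical range of a, and hence the spectrum of a, is contained in the half-plane {z : Re z ≤ 0}; in particular 1 − a is invertible and ‖(1−a)⁻¹‖ ≤ 1. -/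
theorem isUnit_of_isUnit_mul_of_isUnit_mul {M : Type*} [Monoid M] {b c d : M}
    (hbc : IsUnit (b * c)) (hdb : IsUnit (d * b)) : IsUnit b := by
  have hr : b * (c * ↑hbc.unit⁻¹) = 1 := by rw [← mul_assoc]; exact hbc.mul_val_inv
  have hl : (↑hdb.unit⁻¹ * d) * b = 1 := by rw [mul_assoc]; exact hdb.val_inv_mul
  exact isUnit_iff_exists.2 ⟨_, hr, left_inv_eq_right_inv hl hr ▸ hl⟩

section

variable {A : Type*} [NormedRing A] [NormedAlgebra ℂ A] [NormOneClass A]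

theorem isState_of_norm_le_one {ρ : A →L[ℂ] ℂ} (hρ : ‖ρ‖ ≤ 1)
    (h1 : ρ 1 = 1) : IsState ρ := by
  refine ⟨hρ.antisymm ?_, h1⟩
  simpa [h1] using ρ.le_opNorm 1

theorem exists_isState_mul_right {x : A} (hx : x ≠ 0) :
    ∃ φ ρ : A →L[ℂ] ℂ, ‖φ‖ = 1 ∧ IsState ρ ∧ ∀ c, φ (c * x) = ‖x‖ * ρ c := by
  have hx' : 0 < ‖x‖ := norm_pos_iff.2 hx
  obtain ⟨φ, hφ, hφx⟩ := exists_dual_vector ℂ x hx'.ne'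
  let ρ : A →L[ℂ] ℂ := (‖x‖⁻¹ : ℂ) • φ.comp ((ContinuousLinearMap.mul ℂ A).flip x)
  have hρ : ∀ c, φ (c * x) = ‖x‖ * ρ c := fun c => by simp [ρ, hx'.ne']
  refine ⟨φ, ρ, hφ, isState_of_norm_le_one ?_ ?_, hρ⟩
  · refine ρ.opNorm_le_bound zero_le_one fun c => le_of_mul_le_mul_left ?_ hx'
    calc ‖x‖ * ‖ρ c‖ = ‖φ (c * x)‖ := by simp [hρ]
      _ ≤ ‖c * x‖ := by simpa [hφ] using φ.le_opNorm (c * x)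
      _ ≤ ‖x‖ * (1 * ‖c‖) := by rw [one_mul, mul_comm]; exact norm_mul_le c x
  · simpa [hφx, hx'.ne'] using (hρ 1).symm

theorem IsDissipative.norm_le_norm_one_sub_mul {a : A} (ha : IsDissipative a)
    (x : A) : ‖x‖ ≤ ‖(1 - a) * x‖ := by
  rcases eq_or_ne x 0 with rfl | hx
  · simp
  obtain ⟨φ, ρ, hφ, hρ, hφρ⟩ := exists_isState_mul_right hx
  have hre : (φ ((1 - a) * x)).re = ‖x‖ * (1 - (ρ a).re) := by
    have hφx : φ x = ‖x‖ := by simpa [hρ.2] using hφρ 1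
    rw [sub_mul, one_mul, map_sub, hφx, hφρ]
    simp [mul_sub]
  calc ‖x‖ ≤ ‖x‖ * (1 - (ρ a).re) :=
        le_mul_of_one_le_right (norm_nonneg x) (by linarith [ha ρ hρ])
    _ = (φ ((1 - a) * x)).re := hre.symm
    _ ≤ ‖φ ((1 - a) * x)‖ := Complex.re_le_norm _
    _ ≤ ‖(1 - a) * x‖ := by simpa [hφ] using φ.le_opNorm ((1 - a) * x)

theorem exists_isState_forall_mem_eq_zero (M : Submodule ℂ A)
    (hM : ∀ m ∈ M, 1 ≤ ‖1 - m‖) : ∃ ρ : A →L[ℂ] ℂ, IsState ρ ∧ ∀ m ∈ M, ρ m = 0 := by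
  have hq : ‖(Submodule.Quotient.mk 1 : A ⧸ M)‖ = 1 := by
    refine le_antisymm (by simpa using Submodule.Quotient.norm_mk_le M 1) ?_
    have : ‖(Submodule.Quotient.mk 1 : A ⧸ M)‖ = Metric.infDist 1 (M : Set A) :=
      QuotientAddGroup.norm_mk (S := M.toAddSubgroup) 1
    rw [this, Metric.le_infDist ⟨0, M.zero_mem⟩]
    simpa [dist_eq_norm] using hM
  obtain ⟨g, hg, hg1⟩ :=
    exists_dual_vector ℂ (Submodule.Quotient.mk 1 : A ⧸ M) (by simp [hq])
  refine ⟨g.comp M.mkQL, isState_of_norm_le_one ?_ (by simp [hg1, hq]), fun m hm => ?_⟩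
  · refine ContinuousLinearMap.opNorm_le_bound _ zero_le_one fun y => ?_
    calc ‖g (Submodule.Quotient.mk y)‖ ≤ ‖(Submodule.Quotient.mk y : A ⧸ M)‖ := by
          simpa [hg] using g.le_opNorm (Submodule.Quotient.mk y)
      _ ≤ 1 * ‖y‖ := by simpa using Submodule.Quotient.norm_mk_le M y
  · simp [(Submodule.Quotient.mk_eq_zero M).2 hm]

theorem exists_isState_apply_eq_zero [CompleteSpace A] {b : A}
    (hb : ¬IsUnit b) : ∃ ρ : A →L[ℂ] ℂ, IsState ρ ∧ ρ b = 0 := by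
  have isUnit_of_norm_one_sub_lt {y : A} (hy : ‖1 - y‖ < 1) : IsUnit y := by
    simpa using isUnit_one_sub_of_norm_lt_one hy
  by_cases hright : ∃ c : A, ‖1 - b * c‖ < 1
  · obtain ⟨c, hc⟩ := hright
    have hleft (d : A) : 1 ≤ ‖1 - d * b‖ := not_lt.1 fun hd =>
      hb (isUnit_of_isUnit_mul_of_isUnit_mul (isUnit_of_norm_one_sub_lt hc)
        (isUnit_of_norm_one_sub_lt hd))
    obtain ⟨ρ, hρ, hρb⟩ := exists_isState_forall_mem_eq_zero
      (LinearMap.range (LinearMap.mulRight ℂ b)) (by rintro _ ⟨d, rfl⟩; exact hleft d)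
    exact ⟨ρ, hρ, hρb b ⟨1, one_mul b⟩⟩
  · obtain ⟨ρ, hρ, hρb⟩ := exists_isState_forall_mem_eq_zero
      (LinearMap.range (LinearMap.mulLeft ℂ b))
      (by rintro _ ⟨c, rfl⟩; exact not_lt.1 fun hc => hright ⟨c, hc⟩)
    exact ⟨ρ, hρ, hρb b ⟨1, mul_one b⟩⟩

theorem exists_isState_apply_eq_of_mem_spectrum [CompleteSpace A] {a : A}
    {z : ℂ} (hz : z ∈ spectrum ℂ a) : ∃ ρ : A →L[ℂ] ℂ, IsState ρ ∧ ρ a = z := by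
  obtain ⟨ρ, hρ, hρz⟩ := exists_isState_apply_eq_zero hz
  refine ⟨ρ, hρ, ?_⟩
  rw [map_sub, Algebra.algebraMap_eq_smul_one, map_smul, hρ.2, smul_eq_mul, mul_one,
    sub_eq_zero] at hρz
  exact hρz.symm

theorem IsDissipative.re_le_zero_of_mem_spectrum [CompleteSpace A] {a : A}
    (ha : IsDissipative a) {z : ℂ} (hz : z ∈ spectrum ℂ a) : z.re ≤ 0 := by
  obtain ⟨ρ, hρ, rfl⟩ := exists_isState_apply_eq_of_mem_spectrum hz
  exact ha ρ hρ

end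

theorem stmt2 {A : Type*} [NormedRing A] [NormedAlgebra ℂ A] [NormOneClass A]
    [CompleteSpace A] (a : A) (ha : IsDissipative a) :
    (∀ ρ : A →L[ℂ] ℂ, IsState ρ → (ρ a).re ≤ 0) ∧
    (∀ z ∈ spectrum ℂ a, z.re ≤ 0) ∧
    IsUnit (1 - a) ∧ ‖Ring.inverse (1 - a)‖ ≤ 1 := by
  have hunit : IsUnit (1 - a) := by
    by_contra h
    have := ha.re_le_zero_of_mem_spectrum (z := 1) (by simpa [spectrum.mem_iff] using h)
    norm_num at this
  refine ⟨ha, fun z => ha.re_le_zero_of_mem_spectrum, hunit, ?_⟩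
  simpa [Ring.mul_inverse_cancel _ hunit] using
    ha.norm_le_norm_one_sub_mul (Ring.inverse (1 - a))
end

section
/- Let A be a unital complex Banach algebra with ‖1‖ = 1 and a ∈ A with ‖a‖ ≤ 1. Then a is dissipative if and only if ‖1 + t·a‖ ≤ 1 + t² for all t ≥ 0. -/
/-!
The key quantity is `normRightDeriv a`, the right derivative at `0` of the convex function
`t ↦ ‖1 + t • a‖`. It is sublinear and dominated by the norm, so by Hahn–Banach and
complexification it equals `Re ρ(a)` for some state `ρ`, while `Re ρ(a) ≤ normRightDeriv a` for
every state: `a` is dissipative iff `normRightDeriv a ≤ 0`.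

In that case the identity `1 + (s + t) a = (1 + s a)(1 + t a) - s t a²` bounds the right Dini
derivative of `f s = ‖1 + s a‖` by `f s · normRightDeriv a + s ‖a‖² ≤ s ‖a‖²`, and comparison
with `1 + ‖a‖² s² / 2` gives `‖1 + t a‖ ≤ 1 + ‖a‖² t² / 2`. Conversely, `‖1 + t a‖ ≤ 1 + t²`
makes the slopes at `0`, hence `normRightDeriv a`, at most `t` for every `t > 0`.
-/

open Filter Set Topology

noncomputable section

theorem exists_linearMap_le_sublinear_eq {E : Type*} [AddCommGroup E] [Module ℝ E] (N : E → ℝ)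
    (N_hom : ∀ c : ℝ, 0 < c → ∀ x, N (c • x) = c * N x) (N_add : ∀ x y, N (x + y) ≤ N x + N y)
    (x : E) : ∃ g : E →ₗ[ℝ] ℝ, (∀ y, g y ≤ N y) ∧ g x = N x := by
  have N_zero : N 0 = 0 := by
    have h := N_hom 2 two_pos 0
    rw [smul_zero] at h
    linarith
  have smul_le : ∀ c : ℝ, c * N x ≤ N (c • x) := by
    intro c
    rcases lt_trichotomy c 0 with hc | rfl | hc
    · have := N_add x (-x)
      rw [add_neg_cancel, N_zero] at this
      rw [← neg_neg c, neg_smul, ← smul_neg, N_hom _ (neg_pos.2 hc)]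
      nlinarith
    · simp [N_zero]
    · exact (N_hom c hc x).ge
  let f : E →ₗ.[ℝ] ℝ := LinearPMap.mkSpanSingleton' x (N x) fun c hc ↦ by
    rcases smul_eq_zero.1 hc with rfl | rfl <;> simp [N_zero]
  obtain ⟨g, hgf, hgN⟩ := exists_extension_of_le_sublinear f N N_hom N_add <| by
    rintro ⟨y, hy⟩
    obtain ⟨c, rfl⟩ := Submodule.mem_span_singleton.1 hy
    rw [LinearPMap.mkSpanSingleton'_apply, smul_eq_mul]
    exact smul_le c
  exact ⟨g, hgN, (hgf ⟨x, Submodule.mem_span_singleton_self x⟩).trans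
    (LinearPMap.mkSpanSingleton'_apply_self _ _ _ _)⟩

section RealAlgebra

variable {A : Type*} [NormedRing A] [NormedAlgebra ℝ A]

def normAlong (x : A) (t : ℝ) : ℝ := ‖(1 : A) + t • x‖

def normRightDeriv (x : A) : ℝ := sInf (slope (normAlong x) 0 '' Ioi 0)

theorem continuous_normAlong (x : A) : Continuous (normAlong x) := by
  unfold normAlong; fun_prop

theorem convexOn_normAlong (x : A) : ConvexOn ℝ univ (normAlong x) := by
  have h : normAlong x = (‖·‖) ∘ AffineMap.lineMap (1 : A) (1 + x) := by
    ext t; simp [normAlong, AffineMap.lineMap_apply_module', add_comm]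
  rw [h]
  exact (convexOn_norm convex_univ).comp_affineMap _

theorem abs_slope_normAlong_le (x : A) (t : ℝ) : |slope (normAlong x) 0 t| ≤ ‖x‖ := by
  rcases eq_or_ne t 0 with rfl | ht
  · simp
  rw [slope_def_field, sub_zero, abs_div, div_le_iff₀ (abs_pos.2 ht)]
  calc |normAlong x t - normAlong x 0| ≤ ‖t • x‖ := by
        simpa [normAlong] using abs_norm_sub_norm_le ((1 : A) + t • x) 1
    _ = ‖x‖ * |t| := by rw [norm_smul, Real.norm_eq_abs, mul_comm]

theorem bddBelow_slope_normAlong (x : A) : BddBelow (slope (normAlong x) 0 '' Ioi 0) :=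
  ⟨-‖x‖, by rintro _ ⟨t, -, rfl⟩; exact neg_le_of_abs_le (abs_slope_normAlong_le x t)⟩

theorem tendsto_slope_normAlong (x : A) :
    Tendsto (slope (normAlong x) 0) (𝓝[>] 0) (𝓝 (normRightDeriv x)) :=
  MonotoneOn.tendsto_nhdsGT ((convexOn_normAlong x).slope_mono (mem_univ 0) |>.mono
    fun t ht ↦ ⟨mem_univ t, (mem_Ioi.1 ht).ne'⟩) (bddBelow_slope_normAlong x)

theorem tendsto_slope_normAlong_const_mul (x : A) {c : ℝ} (hc : 0 < c) :
    Tendsto (fun t ↦ slope (normAlong x) 0 (c * t)) (𝓝[>] 0) (𝓝 (normRightDeriv x)) :=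
  (tendsto_slope_normAlong x).comp (tendsto_comap.mono_left (comap_mulLeft_nhdsGT_zero hc).ge)

theorem normRightDeriv_le_slope (x : A) {t : ℝ} (ht : 0 < t) :
    normRightDeriv x ≤ slope (normAlong x) 0 t :=
  csInf_le (bddBelow_slope_normAlong x) (mem_image_of_mem _ ht)

theorem normRightDeriv_le_norm (x : A) : normRightDeriv x ≤ ‖x‖ :=
  (normRightDeriv_le_slope x one_pos).trans (le_of_abs_le (abs_slope_normAlong_le x 1))

theorem normAlong_smul (x : A) (c t : ℝ) : normAlong (c • x) t = normAlong x (c * t) := by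
  rw [normAlong, normAlong, smul_smul, mul_comm]

theorem slope_normAlong_smul (x : A) (c t : ℝ) :
    slope (normAlong (c • x)) 0 t = c * slope (normAlong x) 0 (c * t) := by
  rcases eq_or_ne c 0 with rfl | hc
  · simp [slope_def_field, normAlong]
  rcases eq_or_ne t 0 with rfl | ht
  · simp
  simp only [slope_def_field, normAlong_smul, mul_zero, sub_zero]
  field_simp

theorem normRightDeriv_smul {c : ℝ} (hc : 0 < c) (x : A) :
    normRightDeriv (c • x) = c * normRightDeriv x := by
  refine tendsto_nhds_unique (tendsto_slope_normAlong (c • x)) ?_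
  rw [funext (slope_normAlong_smul x c)]
  exact (tendsto_slope_normAlong_const_mul x hc).const_mul c

theorem two_mul_normAlong_add_le (x y : A) (t : ℝ) :
    2 * normAlong (x + y) t ≤ normAlong x (2 * t) + normAlong y (2 * t) := by
  have h : (2 : ℝ) • ((1 : A) + t • (x + y)) = ((1 : A) + (2 * t) • x) + ((1 : A) + (2 * t) • y) :=
    by module
  calc 2 * normAlong (x + y) t = ‖(2 : ℝ) • ((1 : A) + t • (x + y))‖ := by
        rw [norm_smul, Real.norm_two, normAlong]
    _ ≤ _ := h ▸ norm_add_le _ _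

theorem normAlong_add_le_mul (x : A) (s t : ℝ) :
    normAlong x (s + t) ≤ normAlong x s * normAlong x t + |s * t| * ‖x‖ ^ 2 := by
  have h : (1 : A) + (s + t) • x = ((1 : A) + s • x) * ((1 : A) + t • x) - (s * t) • (x * x) := by
    simp only [mul_add, add_mul, one_mul, mul_one, smul_mul_smul_comm]
    module
  calc normAlong x (s + t) ≤ normAlong x s * normAlong x t + ‖(s * t) • (x * x)‖ := by
        rw [normAlong, h]
        exact (norm_sub_le _ _).trans (by gcongr; exact norm_mul_le _ _)
    _ ≤ _ := by
        rw [norm_smul, Real.norm_eq_abs, sq]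
        gcongr
        exact norm_mul_le x x

section NormOne

variable [NormOneClass A]

theorem slope_normAlong (x : A) (t : ℝ) : slope (normAlong x) 0 t = (normAlong x t - 1) / t := by
  simp [slope_def_field, normAlong]

theorem normRightDeriv_add (x y : A) :
    normRightDeriv (x + y) ≤ normRightDeriv x + normRightDeriv y := by
  refine le_of_tendsto_of_tendsto (tendsto_slope_normAlong (x + y))
    ((tendsto_slope_normAlong_const_mul x two_pos).add
      (tendsto_slope_normAlong_const_mul y two_pos)) ?_
  filter_upwards [self_mem_nhdsWithin] with t (ht : 0 < t)
  have := two_mul_normAlong_add_le x y t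
  rw [slope_normAlong, slope_normAlong, slope_normAlong, ← add_div,
    div_le_div_iff₀ ht (by positivity)]
  nlinarith

theorem normRightDeriv_neg_one_le : normRightDeriv (-1 : A) ≤ -1 :=
  (normRightDeriv_le_slope _ one_pos).trans_eq (by simp [slope_normAlong, normAlong])

theorem normRightDeriv_nonpos_of_normAlong_le (x : A) (C : ℝ)
    (h : ∀ t, 0 < t → normAlong x t ≤ 1 + C * t ^ 2) : normRightDeriv x ≤ 0 := by
  have hC : Tendsto (fun t ↦ C * t) (𝓝[>] 0) (𝓝 0) :=
    ((continuous_const_mul C).tendsto' 0 0 (mul_zero C)).mono_left nhdsWithin_le_nhds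
  refine le_of_tendsto_of_tendsto (tendsto_slope_normAlong x) hC ?_
  filter_upwards [self_mem_nhdsWithin] with t (ht : 0 < t)
  rw [slope_normAlong, div_le_iff₀ ht]
  nlinarith [h t ht]

theorem slope_normAlong_le (x : A) {s t : ℝ} (hs : 0 ≤ s) (ht : 0 < t) :
    slope (normAlong x) s (s + t) ≤ normAlong x s * slope (normAlong x) 0 t + s * ‖x‖ ^ 2 := by
  have h := normAlong_add_le_mul x s t
  rw [abs_of_nonneg (by positivity)] at h
  rw [slope_def_field, slope_normAlong, add_sub_cancel_left, div_le_iff₀ ht, add_mul,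
    mul_assoc, div_mul_cancel₀ _ ht.ne']
  nlinarith

theorem frequently_slope_normAlong_lt (x : A) (hx : normRightDeriv x ≤ 0) {s r : ℝ} (hs : 0 ≤ s)
    (hr : s * ‖x‖ ^ 2 < r) : ∃ᶠ z in 𝓝[>] s, slope (normAlong x) s z < r := by
  set δ := (r - s * ‖x‖ ^ 2) / (normAlong x s + 1)
  have hNs : 0 ≤ normAlong x s := norm_nonneg _
  have hδ : 0 < δ := div_pos (by linarith) (by linarith)
  have hr' : (normAlong x s + 1) * δ + s * ‖x‖ ^ 2 = r := by
    simp only [δ]; field_simp; ring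
  have hsmall : ∀ᶠ t in 𝓝[>] 0, slope (normAlong x) s (s + t) < r := by
    filter_upwards [(tendsto_slope_normAlong x).eventually_lt_const (hx.trans_lt hδ),
      self_mem_nhdsWithin] with t hlt (ht : 0 < t)
    calc slope (normAlong x) s (s + t)
        ≤ normAlong x s * slope (normAlong x) 0 t + s * ‖x‖ ^ 2 := slope_normAlong_le x hs ht
      _ < (normAlong x s + 1) * δ + s * ‖x‖ ^ 2 := by nlinarith
      _ = r := hr'
  have hmap : 𝓝[>] s = map (s + ·) (𝓝[>] 0) := by rw [map_add_left_nhdsGT, add_zero]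
  exact (hmap ▸ hsmall : ∀ᶠ z in 𝓝[>] s, slope (normAlong x) s z < r).frequently

theorem normAlong_le_of_normRightDeriv_nonpos (x : A) (hx : normRightDeriv x ≤ 0) {t : ℝ}
    (ht : 0 ≤ t) : normAlong x t ≤ 1 + ‖x‖ ^ 2 * t ^ 2 / 2 := by
  refine image_le_of_liminf_slope_right_le_deriv_boundary (continuous_normAlong x).continuousOn
    (B := fun s ↦ 1 + ‖x‖ ^ 2 * s ^ 2 / 2) (B' := fun s ↦ s * ‖x‖ ^ 2) (by simp [normAlong])
    (by fun_prop) (fun s _ ↦ ?_)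
    (fun s hs _ hr ↦ frequently_slope_normAlong_lt x hx hs.1 hr) ⟨ht, le_rfl⟩
  have hB := (((hasDerivAt_pow 2 s).const_mul (‖x‖ ^ 2)).div_const 2).const_add 1
  exact hB.hasDerivWithinAt.congr_deriv (by ring)

end NormOne

end RealAlgebra

section States

variable {A : Type*} [NormedRing A] [NormedAlgebra ℂ A] [NormOneClass A]

theorem exists_isState_re_eq (u : A →ₗ[ℝ] ℝ) (hu : ∀ x, u x ≤ ‖x‖) (hu_one : u 1 = 1) :
    ∃ ρ : A →L[ℂ] ℂ, IsState ρ ∧ ∀ x, (ρ x).re = u x := by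
  have hbound : ∀ x, ‖u x‖ ≤ 1 * ‖x‖ := fun x ↦ by
    rw [one_mul, Real.norm_eq_abs, abs_le]
    exact ⟨by linarith [map_neg u x ▸ norm_neg x ▸ hu (-x)], hu x⟩
  set ρ : A →L[ℂ] ℂ := StrongDual.extendRCLike (u.mkContinuous 1 hbound)
  have hre : ∀ x, (ρ x).re = u x := fun x ↦ StrongDual.re_extendRCLike_apply (𝕜 := ℂ) _ x
  have hρ_le : ‖ρ‖ ≤ 1 :=
    (StrongDual.norm_extendRCLike _).trans_le (LinearMap.mkContinuous_norm_le _ zero_le_one _)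
  have hρ_one : ρ 1 = 1 := by
    have hle : ‖ρ 1‖ ≤ 1 := (ρ.le_opNorm 1).trans (by rw [norm_one, mul_one]; exact hρ_le)
    have him : (ρ 1).im = 0 := by
      rw [← Complex.abs_re_eq_norm]
      exact le_antisymm (Complex.abs_re_le_norm _) (by rw [hre, hu_one]; simpa using hle)
    exact Complex.ext (by rw [hre, hu_one, Complex.one_re]) (by rw [him, Complex.one_im])
  refine ⟨ρ, ⟨le_antisymm hρ_le ?_, hρ_one⟩, hre⟩
  simpa [hρ_one] using ρ.le_opNorm 1

theorem IsState.re_apply_le_normRightDeriv {ρ : A →L[ℂ] ℂ} (hρ : IsState ρ) (a : A) :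
    (ρ a).re ≤ normRightDeriv a := by
  refine le_csInf ⟨_, mem_image_of_mem _ (mem_Ioi.2 one_pos)⟩ ?_
  rintro _ ⟨t, ht : 0 < t, rfl⟩
  rw [slope_normAlong, le_div_iff₀ ht]
  have h : (ρ ((1 : A) + t • a)).re = 1 + (ρ a).re * t := by
    rw [map_add, hρ.2, ρ.map_smul_of_tower, Complex.add_re, Complex.one_re, Complex.smul_re,
      smul_eq_mul, mul_comm]
  have := (Complex.re_le_norm _).trans (ρ.le_opNorm ((1 : A) + t • a))
  rw [h, hρ.1, one_mul] at this
  rw [normAlong]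
  linarith

theorem exists_isState_re_apply_eq_normRightDeriv (a : A) :
    ∃ ρ : A →L[ℂ] ℂ, IsState ρ ∧ (ρ a).re = normRightDeriv a := by
  obtain ⟨u, hu, hua⟩ := exists_linearMap_le_sublinear_eq (E := A) normRightDeriv
    (fun _ ↦ normRightDeriv_smul) normRightDeriv_add a
  have hu_norm : ∀ x, u x ≤ ‖x‖ := fun x ↦ (hu x).trans (normRightDeriv_le_norm x)
  have hu_neg_one : u (-1) ≤ -1 := (hu (-1)).trans normRightDeriv_neg_one_le
  have hu_one : u 1 = 1 := le_antisymm ((hu_norm 1).trans_eq norm_one)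
    (by rw [map_neg] at hu_neg_one; linarith)
  obtain ⟨ρ, hρ, hre⟩ := exists_isState_re_eq u hu_norm hu_one
  exact ⟨ρ, hρ, (hre a).trans hua⟩

theorem isDissipative_iff_normRightDeriv_nonpos (a : A) :
    IsDissipative a ↔ normRightDeriv a ≤ 0 := by
  refine ⟨fun h ↦ ?_, fun h ρ hρ ↦ (hρ.re_apply_le_normRightDeriv a).trans h⟩
  obtain ⟨ρ, hρ, hre⟩ := exists_isState_re_apply_eq_normRightDeriv a
  exact hre ▸ h ρ hρ

end States

end

theorem stmt3_general {A : Type*} [NormedRing A] [NormedAlgebra ℂ A] [NormOneClass A]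
    (a : A) (ha : ‖a‖ ≤ 1) :
    IsDissipative a ↔ ∀ t : ℝ, 0 ≤ t → ‖1 + (t : ℂ) • a‖ ≤ 1 + t ^ 2 := by
  simp only [Complex.coe_smul, isDissipative_iff_normRightDeriv_nonpos]
  refine ⟨fun h t ht ↦ ?_, fun h ↦ normRightDeriv_nonpos_of_normAlong_le a 1 ?_⟩
  · have hsq : ‖a‖ ^ 2 ≤ 1 := pow_le_one₀ (norm_nonneg a) ha
    calc ‖1 + t • a‖ ≤ 1 + ‖a‖ ^ 2 * t ^ 2 / 2 := normAlong_le_of_normRightDeriv_nonpos a h ht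
      _ ≤ 1 + t ^ 2 := by nlinarith [sq_nonneg t]
  · simpa [normAlong] using fun t ht ↦ h t ht.le

theorem stmt3 {A : Type*} [NormedRing A] [NormedAlgebra ℂ A] [NormOneClass A]
    [CompleteSpace A] (a : A) (ha : ‖a‖ ≤ 1) :
    IsDissipative a ↔ ∀ t : ℝ, 0 ≤ t → ‖1 + (t : ℂ) • a‖ ≤ 1 + t ^ 2 :=
  stmt3_general a ha
end

section
/- Let A be a unital complex Banach algebra with ‖1‖ = 1 and let ρ ∈ A* satisfy Re ρ(a) ≤ 0 for every dissipative a ∈ A. Then ρ is a nonnegative multiple of a state, i.e., ρ(1) ≥ 0 and |ρ(a)| ≤ ‖a‖·ρ(1) for all a ∈ A. -/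
theorem norm_apply_le_of_re_apply_le {𝕜 E : Type*} [RCLike 𝕜] [SeminormedAddCommGroup E]
    [NormedSpace 𝕜 E] (f : E →ₗ[𝕜] 𝕜) {c : ℝ} (hf : ∀ x, RCLike.re (f x) ≤ c * ‖x‖) (x : E) :
    ‖f x‖ ≤ c * ‖x‖ := by
  obtain ⟨u, hu, hux⟩ := RCLike.exists_norm_eq_mul_self (f x)
  calc ‖f x‖ = RCLike.re (f (u • x)) := by rw [map_smul, smul_eq_mul, ← hux, RCLike.ofReal_re]
    _ ≤ c * ‖u • x‖ := hf _
    _ = c * ‖x‖ := by rw [norm_smul, hu, one_mul]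

section

variable {A : Type*} [NormedRing A] [NormedAlgebra ℂ A]

theorem IsState.norm_apply_le {σ : A →L[ℂ] ℂ} (hσ : IsState σ) (a : A) : ‖σ a‖ ≤ ‖a‖ := by
  simpa [hσ.1] using σ.le_opNorm a

theorem isDissipative_smul_one {z : ℂ} (hz : z.re ≤ 0) : IsDissipative (z • (1 : A)) := by
  intro σ hσ
  simpa [hσ.2] using hz

theorem isDissipative_sub_norm_smul_one (a : A) :
    IsDissipative (a - (‖a‖ : ℂ) • (1 : A)) := by
  intro σ hσ
  have := (Complex.re_le_norm (σ a)).trans (hσ.norm_apply_le a)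
  simpa [hσ.2] using this

theorem re_apply_le_re_one_mul_norm {ρ : A →L[ℂ] ℂ}
    (h : ∀ a : A, IsDissipative a → (ρ a).re ≤ 0) (a : A) :
    (ρ a).re ≤ (ρ 1).re * ‖a‖ := by
  have := h _ (isDissipative_sub_norm_smul_one a)
  simp only [map_sub, map_smul, smul_eq_mul, Complex.sub_re, Complex.re_ofReal_mul] at this
  linarith

end

theorem stmt6_general {A : Type*} [NormedRing A] [NormedAlgebra ℂ A] (ρ : A →L[ℂ] ℂ)
    (h : ∀ a : A, IsDissipative a → (ρ a).re ≤ 0) :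
    0 ≤ (ρ 1).re ∧ (ρ 1).im = 0 ∧ ∀ a : A, ‖ρ a‖ ≤ ‖a‖ * (ρ 1).re := by
  have h_neg := h _ (isDissipative_smul_one (A := A) (z := -1) (by simp))
  have h_I := h _ (isDissipative_smul_one (A := A) (z := Complex.I) (by simp))
  have h_neg_I := h _ (isDissipative_smul_one (A := A) (z := -Complex.I) (by simp))
  simp only [map_smul, smul_eq_mul, neg_mul, one_mul, Complex.neg_re, Complex.I_mul_re,
    neg_nonpos] at h_neg h_I h_neg_I
  refine ⟨h_neg, by linarith, fun a => ?_⟩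
  rw [mul_comm]
  exact norm_apply_le_of_re_apply_le (ρ : A →ₗ[ℂ] ℂ) (re_apply_le_re_one_mul_norm h) a

theorem stmt6 {A : Type*} [NormedRing A] [NormedAlgebra ℂ A] [NormOneClass A]
    [CompleteSpace A] (ρ : A →L[ℂ] ℂ)
    (h : ∀ a : A, IsDissipative a → (ρ a).re ≤ 0) :
    0 ≤ (ρ 1).re ∧ (ρ 1).im = 0 ∧ ∀ a : A, ‖ρ a‖ ≤ ‖a‖ * (ρ 1).re :=
  stmt6_general ρ h
end

section
/- Let A be a unital complex Banach algebra with ‖1‖ = 1 and h ∈ A. If ‖h + i·t·1‖² ≤ ‖h‖² + t² for all real t, then h is hermitian, i.e., ρ(h) ∈ ℝ for every state ρ. -/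
/-- An element is hermitian if `ρ(h) ∈ ℝ` for all states `ρ`. -/
def IsHermitianElt {A : Type*} [NormedRing A] [NormedAlgebra ℂ A] (h : A) : Prop :=
  ∀ ρ : A →L[ℂ] ℂ, IsState ρ → (ρ h).im = 0

/-! A state `ρ` is contractive and fixes `1`, so `|ρ h + i t|² ≤ ‖h + i t‖² ≤ ‖h‖² + t²`.
Expanding the left side, `2 t · Im ρ(h)` stays bounded for all real `t`, which forces
`Im ρ(h) = 0`. -/

lemma eq_zero_of_forall_mul_le {y c : ℝ} (hle : ∀ t : ℝ, y * t ≤ c) : y = 0 := by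
  by_contra hy
  have := hle ((|c| + 1) / y)
  rw [mul_div_cancel₀ _ hy] at this
  linarith [le_abs_self c]

lemma Complex.im_eq_zero_of_forall_norm_add_I_mul_sq_le {z : ℂ} {c : ℝ}
    (hle : ∀ t : ℝ, ‖z + I * t‖ ^ 2 ≤ c + t ^ 2) : z.im = 0 := by
  have h2 : 2 * z.im = 0 := eq_zero_of_forall_mul_le (c := c) fun t => by
    have hexp : ‖z + I * t‖ ^ 2 = z.re ^ 2 + (z.im + t) ^ 2 := by
      simp only [Complex.sq_norm, normSq_apply, add_re, mul_re, I_re, ofReal_re, I_im, ofReal_im,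
        add_im, mul_im]
      ring
    nlinarith [hle t, sq_nonneg z.re, sq_nonneg z.im]
  linarith

lemma IsState.norm_apply_le_s11 {A : Type*} [NormedRing A] [NormedAlgebra ℂ A]
    {ρ : A →L[ℂ] ℂ} (hρ : IsState ρ) (a : A) : ‖ρ a‖ ≤ ‖a‖ := by
  simpa [hρ.1] using ρ.le_opNorm a

lemma IsState.apply_add_smul_one {A : Type*} [NormedRing A] [NormedAlgebra ℂ A]
    {ρ : A →L[ℂ] ℂ} (hρ : IsState ρ) (a : A) (z : ℂ) : ρ (a + z • 1) = ρ a + z := by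
  rw [map_add, map_smul, hρ.2, smul_eq_mul, mul_one]

theorem stmt11_general {A : Type*} [NormedRing A] [NormedAlgebra ℂ A]
    (h : A)
    (hyp : ∀ t : ℝ, ‖h + (Complex.I * t) • 1‖ ^ 2 ≤ ‖h‖ ^ 2 + t ^ 2) :
    IsHermitianElt h := by
  intro ρ hρ
  refine Complex.im_eq_zero_of_forall_norm_add_I_mul_sq_le (c := ‖h‖ ^ 2) fun t => ?_
  calc ‖ρ h + Complex.I * t‖ ^ 2 = ‖ρ (h + (Complex.I * t) • 1)‖ ^ 2 := by
        rw [hρ.apply_add_smul_one]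
    _ ≤ ‖h + (Complex.I * t) • 1‖ ^ 2 := by
        gcongr
        exact hρ.norm_apply_le_s11 _
    _ ≤ ‖h‖ ^ 2 + t ^ 2 := hyp t

theorem stmt11 {A : Type*} [NormedRing A] [NormedAlgebra ℂ A] [NormOneClass A]
    [CompleteSpace A] (h : A)
    (hyp : ∀ t : ℝ, ‖h + (Complex.I * t) • 1‖ ^ 2 ≤ ‖h‖ ^ 2 + t ^ 2) :
    IsHermitianElt h :=
  stmt11_general h hyp
end

section
/- Let A be a unital complex Banach algebra with ‖1‖ = 1, let p ∈ A be an idempotent with ‖1 − p‖ ≤ 1, and let t ∈ (0, ∞). Then ‖1 − t·p‖² ≤ 1 + t²‖p‖². -/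
theorem stmt15 {A : Type*} [NormedRing A] [NormedAlgebra ℂ A] [NormOneClass A]
    [CompleteSpace A] (p : A) (hp : IsIdempotentElem p) (hq : ‖1 - p‖ ≤ 1)
    (t : ℝ) (ht : 0 < t) :
    ‖1 - (t : ℂ) • p‖ ^ 2 ≤ 1 + t ^ 2 * ‖p‖ ^ 2 := by
  have hpn : 0 ≤ ‖p‖ := norm_nonneg p
  rcases le_or_gt t 1 with h1 | h1
  · -- ‖1 - t p‖ ≤ 1
    have key : ‖1 - (t : ℂ) • p‖ ≤ 1 := by
      have hdecomp : 1 - (t : ℂ) • p = ((1 - t : ℝ) : ℂ) • (1 : A) + (t : ℂ) • (1 - p) := by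
        module
      rw [hdecomp]
      calc ‖((1 - t : ℝ) : ℂ) • (1 : A) + (t : ℂ) • (1 - p)‖
          ≤ ‖((1 - t : ℝ) : ℂ) • (1 : A)‖ + ‖(t : ℂ) • (1 - p)‖ := norm_add_le _ _
        _ = |1 - t| * 1 + |t| * ‖1 - p‖ := by
            rw [norm_smul, norm_smul, norm_one, Complex.norm_real, Complex.norm_real,
              Real.norm_eq_abs, Real.norm_eq_abs]
        _ ≤ (1 - t) + t * 1 := by
            rw [abs_of_nonneg (by linarith), abs_of_nonneg ht.le, mul_one]
            have : t * ‖1 - p‖ ≤ t * 1 := by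
              exact mul_le_mul_of_nonneg_left hq ht.le
            linarith
        _ = 1 := by ring
    nlinarith [norm_nonneg (1 - (t : ℂ) • p), sq_nonneg (t * ‖p‖)]
  · rcases eq_or_ne p 0 with rfl | hp0
    · simp
    · have hp1 : 1 ≤ ‖p‖ := by
        have h := norm_mul_le p p
        rw [hp] at h
        have hppos : 0 < ‖p‖ := norm_pos_iff.mpr hp0
        nlinarith
      have key : ‖1 - (t : ℂ) • p‖ ≤ 1 + (t - 1) * ‖p‖ := by
        have hdecomp : 1 - (t : ℂ) • p = (1 - p) + ((1 - t : ℝ) : ℂ) • p := by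
          push_cast
          module
        rw [hdecomp]
        calc ‖(1 - p) + ((1 - t : ℝ) : ℂ) • p‖
            ≤ ‖1 - p‖ + ‖((1 - t : ℝ) : ℂ) • p‖ := norm_add_le _ _
          _ ≤ 1 + (t - 1) * ‖p‖ := by
              rw [norm_smul]
              have : ‖((1 - t : ℝ) : ℂ)‖ = t - 1 := by
                rw [Complex.norm_real, Real.norm_eq_abs, abs_of_nonpos (by linarith)]
                ring
              rw [this]
              linarith
      have hL : 0 ≤ ‖1 - (t : ℂ) • p‖ := norm_nonneg _
      have h2 : (1 + (t - 1) * ‖p‖) ^ 2 ≤ 1 + t ^ 2 * ‖p‖ ^ 2 := by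
        nlinarith [mul_le_mul_of_nonneg_left hp1 (mul_nonneg (by linarith : (0:ℝ) ≤ 2 * (t - 1)) hpn)]
      nlinarith
end

section
/- Let A be a unital complex Banach algebra with ‖1‖ = 1 and a ∈ A with ‖exp(t·a)‖ ≤ 1 for all t ≥ 0. Then 1 − a is invertible with inverse ∫₀^∞ e^{−t}·exp(t·a) dt, and ‖(1 − a)⁻¹‖ ≤ 1. -/
/-!
With `b = a - 1`, the integrand is `exp (t • b)`, and the hypothesis says `‖exp (t • b)‖ ≤ e⁻ᵗ`.
Since `d/dt exp (t • b) = exp (t • b) * b = b * exp (t • b)` and `exp (t • b) → 0`, the fundamental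
theorem of calculus on `(0, ∞)` gives `(∫ exp (t • b)) * b = b * ∫ exp (t • b) = -1`, so the
integral is a two-sided inverse of `-b = 1 - a`, of norm at most `∫ e⁻ᵗ = 1`.
-/

open MeasureTheory Filter Topology NormedSpace Set

section ExpIntegral

variable {A : Type*} [NormedRing A] [NormedAlgebra ℝ A] {b : A}

theorem exp_smul_sub_one [CompleteSpace A] (a : A) (t : ℝ) :
    exp (t • (a - 1)) = Real.exp (-t) • exp (t • a) := by
  let +nondep : NormedAlgebra ℚ A := .restrictScalars ℚ ℝ A
  have hsplit : t • (a - 1) = t • a + algebraMap ℝ A (-t) := by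
    rw [smul_sub, Algebra.algebraMap_eq_smul_one, neg_smul, sub_eq_add_neg]
  rw [hsplit, exp_add_of_commute (Algebra.commutes _ _).symm, ← algebraMap_exp_comm,
    ← Real.exp_eq_exp_ℝ, ← Algebra.commutes, ← Algebra.smul_def]

theorem tendsto_exp_smul_atTop_of_norm_le
    (hb : ∀ t : ℝ, 0 ≤ t → ‖exp (t • b)‖ ≤ Real.exp (-t)) :
    Tendsto (fun t : ℝ => exp (t • b)) atTop (𝓝 0) :=
  squeeze_zero_norm' ((eventually_ge_atTop 0).mono hb) Real.tendsto_exp_neg_atTop_nhds_zero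

theorem norm_integral_Ioi_exp_smul_le_one
    (hb : ∀ t : ℝ, 0 ≤ t → ‖exp (t • b)‖ ≤ Real.exp (-t)) :
    ‖∫ t in Ioi (0 : ℝ), exp (t • b)‖ ≤ 1 :=
  calc ‖∫ t in Ioi (0 : ℝ), exp (t • b)‖ ≤ ∫ t in Ioi (0 : ℝ), Real.exp (-t) :=
        norm_integral_le_of_norm_le (integrableOn_exp_neg_Ioi 0) <|
          (ae_restrict_mem measurableSet_Ioi).mono fun t ht => hb t (le_of_lt ht)
    _ = 1 := integral_exp_neg_Ioi_zero

variable [CompleteSpace A]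

theorem integrableOn_Ioi_exp_smul_of_norm_le
    (hb : ∀ t : ℝ, 0 ≤ t → ‖exp (t • b)‖ ≤ Real.exp (-t)) :
    IntegrableOn (fun t : ℝ => exp (t • b)) (Ioi 0) := by
  let +nondep : NormedAlgebra ℚ A := .restrictScalars ℚ ℝ A
  refine (integrableOn_exp_neg_Ioi 0).mono' (by fun_prop) ?_
  exact (ae_restrict_mem measurableSet_Ioi).mono fun t ht => hb t (le_of_lt ht)

theorem integral_Ioi_exp_smul_mul_eq_neg_one
    (hint : IntegrableOn (fun t : ℝ => exp (t • b)) (Ioi 0))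
    (hlim : Tendsto (fun t : ℝ => exp (t • b)) atTop (𝓝 0)) :
    (∫ t in Ioi (0 : ℝ), exp (t • b)) * b = -1 := by
  rw [← integral_mul_const_of_integrable hint,
    integral_Ioi_of_hasDerivAt_of_tendsto' (fun t _ => hasDerivAt_exp_smul_const b t)
      (hint.mul_const b) hlim]
  simp

theorem mul_integral_Ioi_exp_smul_eq_neg_one
    (hint : IntegrableOn (fun t : ℝ => exp (t • b)) (Ioi 0))
    (hlim : Tendsto (fun t : ℝ => exp (t • b)) atTop (𝓝 0)) :
    b * (∫ t in Ioi (0 : ℝ), exp (t • b)) = -1 := by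
  rw [← integral_const_mul_of_integrable hint,
    integral_Ioi_of_hasDerivAt_of_tendsto' (fun t _ => hasDerivAt_exp_smul_const' b t)
      (hint.const_mul b) hlim]
  simp

end ExpIntegral

theorem stmt16_general {A : Type*} [NormedRing A] [NormedAlgebra ℂ A]
    [CompleteSpace A] (a : A)
    (h : ∀ t : ℝ, 0 ≤ t → ‖NormedSpace.exp ((t : ℂ) • a)‖ ≤ 1) :
    IsUnit (1 - a) ∧
    (1 - a) * (∫ t in Set.Ioi (0 : ℝ), Real.exp (-t) • NormedSpace.exp ((t : ℂ) • a)) = 1 ∧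
    (∫ t in Set.Ioi (0 : ℝ), Real.exp (-t) • NormedSpace.exp ((t : ℂ) • a)) * (1 - a) = 1 ∧
    ‖∫ t in Set.Ioi (0 : ℝ), Real.exp (-t) • NormedSpace.exp ((t : ℂ) • a)‖ ≤ 1 := by
  have hexp (t : ℝ) : Real.exp (-t) • exp ((t : ℂ) • a) = exp (t • (a - 1)) := by
    rw [Complex.coe_smul, exp_smul_sub_one]
  simp_rw [hexp]
  have hb (t : ℝ) (ht : 0 ≤ t) : ‖exp (t • (a - 1))‖ ≤ Real.exp (-t) := by
    rw [← hexp, norm_smul, Real.norm_of_nonneg (Real.exp_pos _).le]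
    exact mul_le_of_le_one_right (Real.exp_pos _).le (h t ht)
  have hint := integrableOn_Ioi_exp_smul_of_norm_le hb
  have hlim := tendsto_exp_smul_atTop_of_norm_le hb
  have hleft : (1 - a) * ∫ t in Ioi (0 : ℝ), exp (t • (a - 1)) = 1 := by
    rw [← neg_sub a 1, neg_mul, mul_integral_Ioi_exp_smul_eq_neg_one hint hlim, neg_neg]
  have hright : (∫ t in Ioi (0 : ℝ), exp (t • (a - 1))) * (1 - a) = 1 := by
    rw [← neg_sub a 1, mul_neg, integral_Ioi_exp_smul_mul_eq_neg_one hint hlim, neg_neg]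
  exact ⟨⟨⟨1 - a, _, hleft, hright⟩, rfl⟩, hleft, hright, norm_integral_Ioi_exp_smul_le_one hb⟩

theorem stmt16 {A : Type*} [NormedRing A] [NormedAlgebra ℂ A] [NormOneClass A]
    [CompleteSpace A] (a : A)
    (h : ∀ t : ℝ, 0 ≤ t → ‖NormedSpace.exp ((t : ℂ) • a)‖ ≤ 1) :
    IsUnit (1 - a) ∧
    (1 - a) * (∫ t in Set.Ioi (0 : ℝ), Real.exp (-t) • NormedSpace.exp ((t : ℂ) • a)) = 1 ∧
    (∫ t in Set.Ioi (0 : ℝ), Real.exp (-t) • NormedSpace.exp ((t : ℂ) • a)) * (1 - a) = 1 ∧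
    ‖∫ t in Set.Ioi (0 : ℝ), Real.exp (-t) • NormedSpace.exp ((t : ℂ) • a)‖ ≤ 1 :=
  stmt16_general a h
end
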